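/- Under the finite-atom assumption on L_#μ, for every α ∈ [0,1]: μ({x ∈ Ω : μ({z ∈ Ω : L(z) > L(x)}) ≤ α}) equals α_i + Δ_i whenever α ∈ [α_i, α_i + Δ_i) for some i ∈ {1,…,N}, and equals α otherwise. -/
import Mathlib


open MeasureTheory Set

/-- The survival function `X(l) = mu {z : L z > l}` (as a real number). -/
noncomputable def survival {α : Type*} [MeasurableSpace α] (μ : Measure α) (L : α → ℝ)
    (lam : ℝ) : ℝ :=
  (μ {z | lam < L z}).toReal

/-- The generalized inverse `Ltilde (ξ) = sup {l ∈ range L : X l > ξ}`. -/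
noncomputable def genInv {α : Type*} [MeasurableSpace α] (μ : Measure α) (L : α → ℝ)
    (ξ : ℝ) : ℝ :=
  sSup {lam : ℝ | lam ∈ Set.range L ∧ ξ < survival μ L lam}

/-- The plateau mass `Δ(r) = μ {z : L z = r}` (as a real number). -/
noncomputable def plateau {α : Type*} [MeasurableSpace α] (μ : Measure α) (L : α → ℝ)
    (t : ℝ) : ℝ :=
  (μ {z | L z = t}).toReal

/-- The non-strict survival function `ψ(r) = μ {z : L z ≥ r}` (as a real number). -/
noncomputable def psi {α : Type*} [MeasurableSpace α] (μ : Measure α) (L : α → ℝ)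
    (t : ℝ) : ℝ :=
  (μ {z | t ≤ L z}).toReal

section Aux

variable {Θ : Type*} [MeasurableSpace Θ] (μ : Measure Θ) [IsFiniteMeasure μ] (L : Θ → ℝ)

lemma survival_antitone : Antitone (survival μ L) := by
  intro s t hst
  exact ENNReal.toReal_mono (measure_ne_top μ _)
    (measure_mono fun z hz => lt_of_le_of_lt hst hz)

lemma psi_le_survival {s t : ℝ} (hst : s < t) : psi μ L t ≤ survival μ L s :=
  ENNReal.toReal_mono (measure_ne_top μ _)
    (measure_mono fun z hz => lt_of_lt_of_le hst hz)

lemma psi_eq_add (hL : Measurable L) (t : ℝ) :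
    psi μ L t = survival μ L t + plateau μ L t := by
  have hset : {z | t ≤ L z} = {z | t < L z} ∪ {z | L z = t} := by
    ext z
    simp only [mem_setOf_eq, mem_union]
    constructor
    · intro h
      rcases lt_or_eq_of_le h with h' | h'
      · exact Or.inl h'
      · exact Or.inr h'.symm
    · rintro (h | h)
      · exact le_of_lt h
      · exact ge_of_eq h
  have hdisj : Disjoint {z | t < L z} {z | L z = t} := by
    rw [Set.disjoint_left]
    intro z hz1 hz2
    have h1 : t < L z := hz1
    have h2 : L z = t := hz2
    exact absurd h2 (ne_of_gt h1)
  have hmeas : MeasurableSet {z | L z = t} := hL (measurableSet_singleton t)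
  rw [psi, hset, measure_union hdisj hmeas, ENNReal.toReal_add (measure_ne_top μ _)
    (measure_ne_top μ _)]
  rfl

lemma survival_right_cont {t α : ℝ} (h : ∀ s, t < s → survival μ L s ≤ α) :
    survival μ L t ≤ α := by
  have hα0 : 0 ≤ α := le_trans ENNReal.toReal_nonneg (h (t + 1) (by linarith))
  have hU : {z | t < L z} = ⋃ n : ℕ, {z | t + 1 / (n + 1) < L z} := by
    ext z
    simp only [mem_setOf_eq, mem_iUnion]
    constructor
    · intro hz
      obtain ⟨n, hn⟩ := exists_nat_one_div_lt (sub_pos.mpr hz)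
      exact ⟨n, by linarith⟩
    · rintro ⟨n, hn⟩
      have : (0 : ℝ) < 1 / (n + 1) := by positivity
      linarith
  have hmono : Monotone fun n : ℕ => {z | t + 1 / (n + 1 : ℝ) < L z} := by
    intro m n hmn z hz
    simp only [mem_setOf_eq] at hz ⊢
    have h1 : (1 : ℝ) / (n + 1) ≤ 1 / (m + 1) :=
      one_div_le_one_div_of_le (by positivity) (by exact_mod_cast by omega)
    linarith
  have hkey : (⨆ n : ℕ, μ {z | t + 1 / (n + 1) < L z}) ≤ ENNReal.ofReal α := by
    refine iSup_le fun n => ?_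
    have hs := h (t + 1 / (n + 1)) (by
      have : (0 : ℝ) < 1 / (n + 1) := by positivity
      linarith)
    calc μ {z | t + 1 / (n + 1 : ℝ) < L z}
        = ENNReal.ofReal (survival μ L (t + 1 / (n + 1))) :=
          (ENNReal.ofReal_toReal (measure_ne_top μ _)).symm
      _ ≤ ENNReal.ofReal α := ENNReal.ofReal_le_ofReal hs
  have := hmono.measure_iUnion (μ := μ)
  rw [survival, hU, this]
  calc (⨆ n : ℕ, μ {z | t + 1 / (n + 1) < L z}).toReal
      ≤ (ENNReal.ofReal α).toReal := ENNReal.toReal_mono ENNReal.ofReal_ne_top hkey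
    _ = α := ENNReal.toReal_ofReal hα0

lemma psi_left_limit (hL : Measurable L) {t α : ℝ} (hα0 : 0 ≤ α)
    (h : ∀ s, s < t → α ≤ survival μ L s) : α ≤ psi μ L t := by
  have hI : {z | t ≤ L z} = ⋂ n : ℕ, {z | t - 1 / (n + 1) < L z} := by
    ext z
    simp only [mem_setOf_eq, mem_iInter]
    constructor
    · intro hz n
      have : (0 : ℝ) < 1 / (n + 1) := by positivity
      linarith
    · intro hz
      by_contra hc
      push_neg at hc
      obtain ⟨n, hn⟩ := exists_nat_one_div_lt (sub_pos.mpr hc)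
      have := hz n
      linarith
  have hanti : Antitone fun n : ℕ => {z | t - 1 / (n + 1 : ℝ) < L z} := by
    intro m n hmn z hz
    simp only [mem_setOf_eq] at hz ⊢
    have h1 : (1 : ℝ) / (n + 1) ≤ 1 / (m + 1) :=
      one_div_le_one_div_of_le (by positivity) (by exact_mod_cast by omega)
    linarith
  have hmeas : ∀ n : ℕ, NullMeasurableSet {z | t - 1 / (n + 1 : ℝ) < L z} μ := by
    intro n
    exact (measurableSet_lt measurable_const hL).nullMeasurableSet
  have hiInf := hanti.measure_iInter hmeas ⟨0, measure_ne_top μ _⟩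
  have hkey : ENNReal.ofReal α ≤ ⨅ n : ℕ, μ {z | t - 1 / (n + 1) < L z} := by
    refine le_iInf fun n => ?_
    have hs := h (t - 1 / (n + 1)) (by
      have : (0 : ℝ) < 1 / (n + 1) := by positivity
      linarith)
    calc ENNReal.ofReal α ≤ ENNReal.ofReal (survival μ L (t - 1 / (n + 1))) :=
          ENNReal.ofReal_le_ofReal hs
      _ = μ {z | t - 1 / (n + 1 : ℝ) < L z} := ENNReal.ofReal_toReal (measure_ne_top μ _)
  rw [psi, hI, hiInf]
  have hne : (⨅ n : ℕ, μ {z | t - 1 / (n + 1) < L z}) ≠ ⊤ :=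
    ne_top_of_le_ne_top (measure_ne_top μ _) (iInf_le _ 0)
  calc α = (ENNReal.ofReal α).toReal := (ENNReal.toReal_ofReal hα0).symm
    _ ≤ (⨅ n : ℕ, μ {z | t - 1 / (n + 1) < L z}).toReal := ENNReal.toReal_mono hne hkey

end Aux

/-- Under the finite-atom assumption on the pushforward of μ under L,
for every α ∈ [0,1], the μ-measure of the set of x with μ(L > L x) ≤ α equals
`α_i + Δ_i` whenever `α ∈ [α_i, α_i + Δ_i)` for some i, and equals α otherwise. -/
theorem measure_sublevel_of_survival
    {d : ℕ} (Ω : Set (Fin d → ℝ)) (μ : Measure Ω) [IsProbabilityMeasure μ]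
    (L : Ω → ℝ) (hL : Measurable L)
    (hbd : ∃ a b : ℝ, ∀ x, a ≤ L x ∧ L x ≤ b)
    (N : ℕ) (r : Fin N → ℝ) (hr : StrictMono r)
    (hatom : ∀ i : Fin N, 0 < μ {z | L z = r i})
    (hnonatom : ∀ s : ℝ, s ∉ Set.range r → μ {z | L z = s} = 0) :
    ∀ α ∈ Set.Icc (0:ℝ) 1,
      (∀ i : Fin N,
        α ∈ Set.Ico (survival μ L (r i)) (survival μ L (r i) + plateau μ L (r i)) →
          (μ {x | (μ {z | L x < L z}).toReal ≤ α}).toReal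
            = survival μ L (r i) + plateau μ L (r i)) ∧
      ((∀ i : Fin N,
        α ∉ Set.Ico (survival μ L (r i)) (survival μ L (r i) + plateau μ L (r i))) →
          (μ {x | (μ {z | L x < L z}).toReal ≤ α}).toReal = α) := by
  obtain ⟨a, b, hab⟩ := hbd
  intro α hα
  obtain ⟨hα0, hα1⟩ := hα
  rcases eq_or_lt_of_le hα1 with hone | hlt
  · -- α = 1
    have hsub : ∀ s : Set Ω, (μ s).toReal ≤ 1 := fun s => by
      have : μ s ≤ 1 := prob_le_one
      calc (μ s).toReal ≤ (1 : ENNReal).toReal := ENNReal.toReal_mono (by simp) this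
        _ = 1 := by simp
    constructor
    · intro i hi
      exfalso
      have h1 : α < survival μ L (r i) + plateau μ L (r i) := hi.2
      have h2 : survival μ L (r i) + plateau μ L (r i) = psi μ L (r i) :=
        (psi_eq_add μ L hL (r i)).symm
      have h3 : psi μ L (r i) ≤ 1 := hsub _
      rw [h2] at h1
      linarith
    · intro _
      have : {x : Ω | (μ {z | L x < L z}).toReal ≤ α} = univ := by
        ext x
        simp only [mem_setOf_eq, mem_univ, iff_true]
        exact le_trans (hsub _) hone.ge
      rw [this, measure_univ]
      simp [hone]
  · -- α < 1
    set A : Set ℝ := {l : ℝ | survival μ L l ≤ α} with hA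
    have hbA : b ∈ A := by
      have : {z : Ω | b < L z} = ∅ := by
        ext z
        simp only [mem_setOf_eq, mem_empty_iff_false, iff_false, not_lt]
        exact (hab z).2
      simp only [hA, mem_setOf_eq, survival, this, measure_empty]
      simpa using hα0
    have hAne : A.Nonempty := ⟨b, hbA⟩
    have hlow : ∀ l ∈ A, a - 1 ≤ l := by
      intro l hl
      by_contra hc
      push_neg at hc
      have : {z : Ω | l < L z} = univ := by
        ext z
        simp only [mem_setOf_eq, mem_univ, iff_true]
        have := (hab z).1
        linarith
      have h1 : survival μ L l = 1 := by
        simp [survival, this]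
      have := hl
      simp only [hA, mem_setOf_eq, h1] at this
      linarith
    have hAbdd : BddBelow A := ⟨a - 1, hlow⟩
    set t : ℝ := sInf A with ht
    have P1 : ∀ s, t < s → survival μ L s ≤ α := by
      intro s hs
      obtain ⟨l, hlA, hls⟩ := (csInf_lt_iff hAbdd hAne).mp hs
      exact le_trans (survival_antitone μ L hls.le) hlA
    have P2 : survival μ L t ≤ α := survival_right_cont μ L P1
    have P3 : ∀ s, s < t → α < survival μ L s := by
      intro s hs
      by_contra hc
      push_neg at hc
      exact absurd (csInf_le hAbdd hc) (not_le.mpr hs)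
    have P4 : α ≤ psi μ L t := psi_left_limit μ L hL hα0 (fun s hs => (P3 s hs).le)
    have hset : {x : Ω | (μ {z | L x < L z}).toReal ≤ α} = {x : Ω | t ≤ L x} := by
      ext x
      simp only [mem_setOf_eq]
      constructor
      · intro h
        exact csInf_le hAbdd h
      · intro h
        rcases eq_or_lt_of_le h with h' | h'
        · rw [← h']; exact P2
        · exact P1 _ h'
    have hval : (μ {x : Ω | (μ {z | L x < L z}).toReal ≤ α}).toReal = psi μ L t := by
      rw [hset]; rfl
    have hdecomp : psi μ L t = survival μ L t + plateau μ L t := psi_eq_add μ L hL t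
    constructor
    · intro i hi
      have hti : t = r i := by
        have hle : t ≤ r i := csInf_le hAbdd hi.1
        rcases eq_or_lt_of_le hle with h' | h'
        · exact h'
        · exfalso
          set s := (t + r i) / 2 with hs
          have hts : t < s := by rw [hs]; linarith
          have hsr : s < r i := by rw [hs]; linarith
          have h1 : survival μ L s ≤ α := P1 s hts
          have h2 : psi μ L (r i) ≤ survival μ L s := psi_le_survival μ L hsr
          have h3 : α < psi μ L (r i) := by
            rw [psi_eq_add μ L hL]; exact hi.2
          linarith
      rw [hval, hti, psi_eq_add μ L hL]
    · intro hno
      by_cases htr : t ∈ Set.range r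
      · obtain ⟨i, hi⟩ := htr
        have hni := hno i
        rw [Set.mem_Ico] at hni
        push_neg at hni
        have h1 : survival μ L (r i) ≤ α := by rw [hi]; exact P2
        have h2 : survival μ L (r i) + plateau μ L (r i) ≤ α := hni h1
        have h3 : α ≤ survival μ L (r i) + plateau μ L (r i) := by
          rw [← psi_eq_add μ L hL, hi]; exact P4
        have h4 := psi_eq_add μ L hL (r i)
        rw [hval, ← hi]
        linarith
      · have hΔ : plateau μ L t = 0 := by
          rw [plateau, hnonatom t htr]
          simp
        have h1 : psi μ L t = survival μ L t := by rw [hdecomp, hΔ, add_zero]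
        rw [hval, h1]
        rw [h1] at P4
        linarith [le_antisymm P2 P4]
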